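/- arXiv:1407.5843 — 7 statements merged into one kernel-verified Lean document; each statement's English description precedes it below -/
import Mathlib

section
/- Let r ≥ 2 and a be coprime positive integers, and let b be an inverse of a modulo r (i.e. ab ≡ 1 mod r). For any integer i, define δ_i = (1/r) · Σ_{ε ∈ μ_r, ε ≠ 1} (ε^{-i} − 1)/(1 − ε^a). Then δ_i = −(bi mod r)/r, where (bi mod r) denotes the smallest nonnegative residue of bi modulo r. -/
/-!
Put `m = bi mod r` and `k = r - m`, so that `1 ≤ k ≤ r` and `ak ≡ -i (mod r)`. For every
nontrivial `r`-th root of unity `ε` this gives `ε^{-i} = (ε^a)^k` with `ε^a ≠ 1`, hence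
`(ε^{-i} - 1)/(1 - ε^a) = -∑_{j<k} ε^{aj}`. Exchanging the sums, `∑_{ε ≠ 1} ε^{aj}` is `r - 1`
for `j = 0` and `-1` for `0 < j < r` (as `r ∤ aj`), so the total is `-(r - 1 - (k - 1)) = -m`.
-/

open Polynomial Finset

lemma zpow_eq_zpow_of_modEq {G₀ : Type*} [GroupWithZero G₀] {x : G₀} {n : ℕ} (hx : x ^ n = 1)
    {k l : ℤ} (h : k ≡ l [ZMOD n]) : x ^ k = x ^ l := by
  obtain rfl | hn := eq_or_ne n 0
  · simpa [Int.ModEq] using congrArg (x ^ ·) h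
  have hx0 : x ≠ 0 := by rintro rfl; simp [zero_pow hn] at hx
  have hemod (m : ℤ) : x ^ m = x ^ (m % n) := by
    simpa using congrArg Units.val
      (zpow_eq_zpow_emod' m (x := Units.mk0 x hx0) (Units.ext (by simpa using hx)))
  rw [hemod k, hemod l, h]

lemma pow_ne_one_of_mul_modEq_one {M : Type*} [Monoid M] {x : M} {r a b : ℕ} (hx : x ^ r = 1)
    (hab : a * b ≡ 1 [MOD r]) (hx1 : x ≠ 1) : x ^ a ≠ 1 := by
  intro h
  apply hx1
  calc x = x ^ (a * b) := by rw [pow_eq_pow_mod (a * b) hx, hab, ← pow_eq_pow_mod 1 hx, pow_one]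
    _ = 1 := by rw [pow_mul, h, one_pow]

namespace IsPrimitiveRoot

variable {R : Type*} [CommRing R] [IsDomain R] [DecidableEq R] {ζ : R} {r : ℕ}

lemma nthRootsFinset_one_eq_image (hζ : IsPrimitiveRoot ζ r) :
    nthRootsFinset r (1 : R) = (range r).image (ζ ^ ·) := by
  ext x
  simp [nthRootsFinset_def, hζ.nthRoots_eq (one_pow r)]

lemma sum_nthRootsFinset_pow_of_not_dvd (hζ : IsPrimitiveRoot ζ r) {n : ℕ} (hn : ¬r ∣ n) :
    ∑ x ∈ nthRootsFinset r (1 : R), x ^ n = 0 := by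
  have hζn : ζ ^ n - 1 ≠ 0 := sub_ne_zero.mpr fun h ↦ hn (hζ.dvd_of_pow_eq_one n h)
  rw [hζ.nthRootsFinset_one_eq_image,
    sum_image fun _ hj _ hl h ↦ hζ.injOn_pow (by simpa using hj) (by simpa using hl) h]
  simp_rw [← pow_mul, mul_comm _ n, pow_mul]
  refine (mul_eq_zero.mp ?_).resolve_right hζn
  rw [geom_sum_mul, ← pow_mul, mul_comm, pow_mul, hζ.pow_eq_one, one_pow, sub_self]

lemma sum_nthRootsFinset_ne_one_pow_of_not_dvd (hζ : IsPrimitiveRoot ζ r) (hr : 0 < r) {n : ℕ}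
    (hn : ¬r ∣ n) : ∑ x ∈ (nthRootsFinset r (1 : R)).filter (· ≠ 1), x ^ n = -1 := by
  rw [filter_ne', sum_erase_eq_sub (one_mem_nthRootsFinset hr),
    hζ.sum_nthRootsFinset_pow_of_not_dvd hn, one_pow, zero_sub]

lemma card_nthRootsFinset_filter_ne_one (hζ : IsPrimitiveRoot ζ r) (hr : 0 < r) :
    #((nthRootsFinset r (1 : R)).filter (· ≠ 1)) = r - 1 := by
  rw [filter_ne', card_erase_of_mem (one_mem_nthRootsFinset hr), hζ.card_nthRootsFinset]

lemma sum_range_sum_nthRootsFinset_ne_one_pow_mul (hζ : IsPrimitiveRoot ζ r) {a : ℕ}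
    (hcop : a.Coprime r) {k : ℕ} (hk : 0 < k) (hkr : k ≤ r) :
    ∑ j ∈ range k, ∑ x ∈ (nthRootsFinset r (1 : R)).filter (· ≠ 1), x ^ (a * j) = r - k := by
  obtain ⟨k, rfl⟩ := Nat.exists_eq_add_of_le' hk
  have hndvd (j : ℕ) (hj : j ∈ range k) : ¬r ∣ a * (j + 1) := fun h ↦ by
    have := Nat.le_of_dvd j.succ_pos (hcop.symm.dvd_of_dvd_mul_left h)
    rw [mem_range] at hj
    omega
  rw [sum_range_succ', sum_congr rfl fun j hj ↦ hζ.sum_nthRootsFinset_ne_one_pow_of_not_dvd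
    (by omega) (hndvd j hj)]
  simp only [sum_const, card_range, mul_zero, pow_zero,
    hζ.card_nthRootsFinset_filter_ne_one (by omega)]
  push_cast [nsmul_eq_mul, Nat.cast_sub (by omega : 1 ≤ r)]
  ring

end IsPrimitiveRoot

lemma div_one_sub_pow_eq_neg_geom_sum {K : Type*} [Field K] {x : K} {r a b k : ℕ} {i : ℤ}
    (hx : x ^ r = 1) (hx1 : x ≠ 1) (hab : a * b ≡ 1 [MOD r]) (hk : (a * k : ℤ) ≡ -i [ZMOD r]) :
    (x ^ (-i) - 1) / (1 - x ^ a) = -∑ j ∈ range k, x ^ (a * j) := by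
  have hxi : x ^ (-i) = (x ^ a) ^ k := by
    rw [← zpow_eq_zpow_of_modEq hx hk, ← pow_mul]
    exact_mod_cast zpow_natCast x (a * k)
  simp_rw [hxi, pow_mul, geom_sum_eq (pow_ne_one_of_mul_modEq_one hx hab hx1), ← div_neg, neg_sub]

theorem delta_formula_general (r a b : ℕ) (hr : 2 ≤ r) (hcop : Nat.Coprime a r)
    (hb : a * b ≡ 1 [MOD r]) (i : ℤ) :
    (1 / r : ℂ) * ∑ ε ∈ (nthRootsFinset r (1 : ℂ)).filter (fun ε => ε ≠ 1),
        (ε ^ (-i) - 1) / (1 - ε ^ a)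
      = -((((b : ℤ) * i) % (r : ℤ) : ℤ) : ℂ) / r := by
  have hζ := Complex.isPrimitiveRoot_exp r (by omega)
  set m := (b : ℤ) * i % r
  have hm : 0 ≤ m ∧ m < r := ⟨Int.emod_nonneg _ (by omega), Int.emod_lt_of_pos _ (by omega)⟩
  obtain ⟨k, hk⟩ : ∃ k : ℕ, (k : ℤ) = r - m := ⟨(r - m).toNat, Int.toNat_of_nonneg (by omega)⟩
  have hak : (a * k : ℤ) ≡ -i [ZMOD r] := by
    have hab : (a * b : ZMod r) = 1 := by exact_mod_cast (ZMod.natCast_eq_natCast_iff _ _ _).mpr hb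
    rw [← ZMod.intCast_eq_intCast_iff]
    push_cast [hk, m, ZMod.intCast_mod, ZMod.natCast_self]
    linear_combination (-i : ZMod r) * hab
  have hterm (ε : ℂ) (hε : ε ∈ (nthRootsFinset r (1 : ℂ)).filter (· ≠ 1)) :=
    div_one_sub_pow_eq_neg_geom_sum ((mem_nthRootsFinset (by omega) 1).mp (mem_filter.mp hε).1)
      (mem_filter.mp hε).2 hb hak
  rw [sum_congr rfl hterm, sum_neg_distrib, sum_comm,
    hζ.sum_range_sum_nthRootsFinset_ne_one_pow_mul hcop (by omega) (by omega),
    show (m : ℂ) = r - k by exact_mod_cast (show m = r - k by omega)]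
  field_simp

/-- For coprime `r ≥ 2` and `a ≥ 1`, with `b` an inverse of `a` mod `r`, and any integer `i`,
`δ_i = (1/r) Σ_{ε ∈ μ_r, ε ≠ 1} (ε^{-i} - 1)/(1 - ε^a) = -(bi mod r)/r`. -/
theorem delta_formula (r a b : ℕ) (hr : 2 ≤ r) (ha : 0 < a) (hcop : Nat.Coprime a r)
    (hb : a * b ≡ 1 [MOD r]) (i : ℤ) :
    (1 / r : ℂ) * ∑ ε ∈ (nthRootsFinset r (1 : ℂ)).filter (fun ε => ε ≠ 1),
        (ε ^ (-i) - 1) / (1 - ε ^ a)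
      = -((((b : ℤ) * i) % (r : ℤ) : ℤ) : ℂ) / r :=
  delta_formula_general r a b hr hcop hb i
end

section
/- Let r ≥ 2 and let a_1,…,a_n be positive integers, none divisible by r, with gcd(a_j, r) = 1 for all j. Define σ_i = (1/r) · Σ_{ε ∈ μ_r, ε ≠ 1} ε^i / ∏_{j=1}^n (1 − ε^{-a_j}). Then the polynomial Σ_{i=0}^{r−1} σ_i t^i is an inverse of ∏_{j=1}^n (1 − t^{a_j}) modulo the cyclotomic-type polynomial (1 − t^r)/(1 − t); that is, (Σ_{i=0}^{r−1} σ_i t^i) · ∏_{j=1}^n (1 − t^{a_j}) ≡ 1 modulo (1 − t^r)/(1 − t) in ℂ[t]. -/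
open Polynomial Finset

/-!
The polynomial `1 + t + ⋯ + t^{r-1}` is `∏ (t - ε)` over the `r`-th roots of unity `ε ≠ 1`,
which are distinct, so it suffices that the product evaluates to `1` at each such `ε`.
Orthogonality of the characters of `μ_r` (finite Fourier inversion) gives
`Σ_i σ_i ε^i = 1 / ∏_j (1 - ε^{a_j})`, and this denominator is nonzero because `ε^{a_j} ≠ 1`
when `a_j` is coprime to `r`.
-/

section Field

variable {K : Type*} [Field K]

theorem geom_sum_of_pow_eq_one [DecidableEq K] {r : ℕ} {z : K} (hz : z ^ r = 1) :
    ∑ i ∈ range r, z ^ i = if z = 1 then (r : K) else 0 := by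
  split_ifs with h
  · simp [h]
  · rw [geom_sum_eq h, hz, sub_self, zero_div]

theorem prod_X_sub_C_dvd_of_isRoot {s : Finset K} {p : K[X]} (h : ∀ x ∈ s, p.IsRoot x) :
    ∏ x ∈ s, (X - C x) ∣ p :=
  prod_dvd_of_coprime (fun _ _ _ _ hxy => pairwise_coprime_X_sub_C Function.injective_id hxy)
    fun x hx => dvd_iff_isRoot.mpr (h x hx)

theorem sum_range_sum_pow_mul_mul_pow {r : ℕ} {S : Finset K} (hS : ∀ η ∈ S, η ^ r = 1)
    (g : K → K) {ε : K} (hε : ε ^ r = 1) (hεS : ε⁻¹ ∈ S) :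
    ∑ i ∈ range r, (∑ η ∈ S, η ^ i * g η) * ε ^ i = r * g ε⁻¹ := by
  classical
  obtain rfl | hr := r.eq_zero_or_pos
  · simp
  have hε0 : ε ≠ 0 := by rintro rfl; simp [hr.ne'] at hε
  calc ∑ i ∈ range r, (∑ η ∈ S, η ^ i * g η) * ε ^ i
      = ∑ η ∈ S, g η * ∑ i ∈ range r, (η * ε) ^ i := by
        simp_rw [sum_mul, mul_sum, mul_pow]
        rw [sum_comm]
        exact sum_congr rfl fun _ _ => sum_congr rfl fun _ _ => by ring
    _ = ∑ η ∈ S, if η = ε⁻¹ then g η * r else 0 := by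
        refine sum_congr rfl fun η hη => ?_
        rw [geom_sum_of_pow_eq_one (by rw [mul_pow, hS η hη, hε, one_mul]),
          mul_eq_one_iff_eq_inv₀ hε0, mul_ite, mul_zero]
    _ = r * g ε⁻¹ := by rw [sum_ite_eq' S, if_pos hεS, mul_comm]

end Field

theorem geom_sum_X_eq_prod_X_sub_C {R : Type*} [CommRing R] [IsDomain R] [DecidableEq R]
    {r : ℕ} {ζ : R} (hr : 0 < r) (hζ : IsPrimitiveRoot ζ r) :
    ∑ i ∈ range r, (X : R[X]) ^ i = ∏ η ∈ (nthRootsFinset r (1 : R)).filter (· ≠ 1), (X - C η) := by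
  refine mul_left_cancel₀ (X_sub_C_ne_zero 1) ?_
  rw [filter_ne', mul_prod_erase _ (fun η => X - C η) (one_mem_nthRootsFinset hr),
    ← X_pow_sub_one_eq_prod hr hζ, map_one, mul_geom_sum]

theorem dedekind_inverse_mod_general (r n : ℕ) (hr : 2 ≤ r) (a : Fin n → ℕ)
    (hcop : ∀ j, Nat.Coprime (a j) r) :
    (∑ i ∈ Finset.range r, (X : ℂ[X]) ^ i) ∣
      ((∑ i ∈ Finset.range r,
          Polynomial.C ((1 / r : ℂ) *
            ∑ ε ∈ (nthRootsFinset r (1 : ℂ)).filter (fun ε => ε ≠ 1),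
              ε ^ i / ∏ j, (1 - ε ^ (-(a j : ℤ)))) * X ^ i) *
        ∏ j, (1 - (X : ℂ[X]) ^ (a j)) - 1) := by
  have hr0 : 0 < r := by omega
  set S := (nthRootsFinset r (1 : ℂ)).filter (fun ε => ε ≠ 1)
  have mem_S (η : ℂ) : η ∈ S ↔ η ^ r = 1 ∧ η ≠ 1 := by simp [S, mem_nthRootsFinset hr0]
  rw [geom_sum_X_eq_prod_X_sub_C hr0 (Complex.isPrimitiveRoot_exp r hr0.ne')]
  refine prod_X_sub_C_dvd_of_isRoot fun ε hε => ?_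
  obtain ⟨hεr, hε1⟩ := (mem_S ε).mp hε
  have hεS : ε⁻¹ ∈ S := (mem_S _).mpr ⟨by rw [inv_pow, hεr, inv_one], inv_ne_one.mpr hε1⟩
  have hD : ∏ j, (1 - ε⁻¹ ^ (-(a j : ℤ))) = ∏ j, (1 - ε ^ a j) := by simp
  have hD0 : ∏ j, (1 - ε ^ a j) ≠ 0 := prod_ne_zero_iff.mpr fun j _ =>
    sub_ne_zero.mpr fun h => hε1 ((pow_eq_one_iff_of_coprime (hcop j)).mp ⟨h.symm, hεr⟩)
  have hinversion := sum_range_sum_pow_mul_mul_pow (fun η hη => ((mem_S η).mp hη).1)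
    (fun η => (∏ j, (1 - η ^ (-(a j : ℤ))))⁻¹) hεr hεS
  simp only [IsRoot, eval_sub, eval_mul, eval_finsetSum, eval_C, eval_pow, eval_X, eval_prod,
    eval_one]
  simp_rw [div_eq_mul_inv, mul_assoc, ← mul_sum, hinversion, hD]
  rw [one_mul, inv_mul_cancel_left₀ (by exact_mod_cast hr0.ne'), inv_mul_cancel₀ hD0, sub_self]

/-- For `r ≥ 2` and positive `a_1, …, a_n` all coprime to `r`, the polynomial
`Σ_{i<r} σ_i t^i` is an inverse of `∏_j (1 - t^{a_j})` modulo `(1-t^r)/(1-t) = 1 + t + ⋯ + t^{r-1}`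
in `ℂ[t]`, where `σ_i = (1/r) Σ_{ε ∈ μ_r, ε ≠ 1} ε^i / ∏_j (1 - ε^{-a_j})`. -/
theorem dedekind_inverse_mod (r n : ℕ) (hr : 2 ≤ r) (a : Fin n → ℕ)
    (ha : ∀ j, 0 < a j) (hcop : ∀ j, Nat.Coprime (a j) r) :
    (∑ i ∈ Finset.range r, (X : ℂ[X]) ^ i) ∣
      ((∑ i ∈ Finset.range r,
          Polynomial.C ((1 / r : ℂ) *
            ∑ ε ∈ (nthRootsFinset r (1 : ℂ)).filter (fun ε => ε ≠ 1),
              ε ^ i / ∏ j, (1 - ε ^ (-(a j : ℤ)))) * X ^ i) *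
        ∏ j, (1 - (X : ℂ[X]) ^ (a j)) - 1) :=
  dedekind_inverse_mod_general r n hr a hcop
end

section
/- Let r ≥ 2, w a positive divisor of r with w ≥ 2, and let a_1,…,a_n be positive integers none divisible by r such that gcd(a_1, r) = w divides a_1. For every ε ∈ μ_r one has 1 + ε^w + ε^{2w} + ⋯ + ε^{w(r/w − 1)} = r/w if ε^w = 1, and = 0 otherwise. Consequently, for σ_i = (1/r)·Σ_{ε ∈ μ_r, ε^{a_j}≠1 ∀j} ε^i/∏_j(1−ε^{-a_j}) and any 0 ≤ k ≤ w−1, one has Σ_{l=0}^{r/w − 1} σ_{wl+k} = 0. -/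
open Polynomial Finset

/-!
Summing `σ_{wl+k}` over `l` turns each summand `ε ^ (wl+k)` of the defining sums into
`ε ^ k` times the geometric sum `∑_l (ε ^ w) ^ l` over a full period of `ε ^ w`. Every `ε`
in the defining sums satisfies `ε ^ (a 0) ≠ 1`, hence `ε ^ w ≠ 1` because `w ∣ a 0`, so
`ε ^ w` is a nontrivial root of unity and that geometric sum vanishes.
-/

theorem Polynomial.pow_eq_of_mem_nthRootsFinset {R : Type*} [CommRing R] [IsDomain R]
    {n : ℕ} {a x : R} (hx : x ∈ nthRootsFinset n a) : x ^ n = a := by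
  rcases Nat.eq_zero_or_pos n with rfl | hn
  · simp at hx
  · exact (mem_nthRootsFinset hn a).mp hx

theorem geom_sum_eq_zero_of_pow_eq_one {R : Type*} [CommRing R] [IsDomain R] {x : R} {m : ℕ}
    (hx : x ≠ 1) (hxm : x ^ m = 1) : ∑ i ∈ range m, x ^ i = 0 := by
  have h := mul_geom_sum x m
  rw [hxm, sub_self] at h
  exact (mul_eq_zero.mp h).resolve_left (sub_ne_zero.mpr hx)

theorem sum_range_pow_mul_of_pow_eq_one {R : Type*} [CommRing R] [IsDomain R] [DecidableEq R]
    {ε : R} {r w : ℕ} (hwr : w ∣ r) (hε : ε ^ r = 1) :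
    ∑ l ∈ range (r / w), ε ^ (w * l) = if ε ^ w = 1 then ((r / w : ℕ) : R) else 0 := by
  simp_rw [pow_mul]
  split_ifs with h
  · simp [h]
  · exact geom_sum_eq_zero_of_pow_eq_one h (by rw [← pow_mul, Nat.mul_div_cancel' hwr, hε])

theorem sum_range_sum_pow_mul_add_div_eq_zero {K : Type*} [Field K] {S : Finset K} {r w : ℕ}
    (g : K → K) (k : ℕ) (hwr : w ∣ r) (hS : ∀ ε ∈ S, ε ^ r = 1 ∧ ε ^ w ≠ 1) :
    ∑ l ∈ range (r / w), ∑ ε ∈ S, ε ^ (w * l + k) / g ε = 0 := by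
  classical
  rw [sum_comm]
  refine sum_eq_zero fun ε hε => ?_
  obtain ⟨hεr, hεw⟩ := hS ε hε
  simp_rw [pow_add, mul_div_assoc, ← sum_mul, sum_range_pow_mul_of_pow_eq_one hwr hεr,
    if_neg hεw, zero_mul]

open Classical in
theorem dedekind_partial_sums_vanish_general (r w n : ℕ) (hwr : w ∣ r)
    (a : Fin (n + 1) → ℕ)
    (hgcd : Nat.gcd (a 0) r = w)
    (σ : ℕ → ℂ)
    (hσ : ∀ i, σ i = (1 / r : ℂ) *
      ∑ ε ∈ (nthRootsFinset r (1 : ℂ)).filter (fun ε => ∀ j, ε ^ (a j) ≠ 1),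
        ε ^ i / ∏ j, (1 - ε ^ (-(a j : ℤ))))
    (k : ℕ) :
    (∀ ε ∈ nthRootsFinset r (1 : ℂ),
        ∑ l ∈ Finset.range (r / w), ε ^ (w * l) =
          if ε ^ w = 1 then ((r / w : ℕ) : ℂ) else 0) ∧
    ∑ l ∈ Finset.range (r / w), σ (w * l + k) = 0 := by
  refine ⟨fun ε hε => sum_range_pow_mul_of_pow_eq_one hwr (pow_eq_of_mem_nthRootsFinset hε), ?_⟩
  obtain ⟨c, hc⟩ : w ∣ a 0 := hgcd ▸ Nat.gcd_dvd_left _ _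
  simp_rw [hσ, ← mul_sum]
  rw [sum_range_sum_pow_mul_add_div_eq_zero _ k hwr fun ε hε => ?_, mul_zero]
  rw [mem_filter] at hε
  refine ⟨pow_eq_of_mem_nthRootsFinset hε.1, fun hεw => hε.2 0 ?_⟩
  rw [hc, pow_mul, hεw, one_pow]

open Classical in
/-- For `r ≥ 2`, `w ≥ 2` a divisor of `r`, and positive integers `a_0, …, a_n` none divisible
by `r` with `gcd(a_0, r) = w`: for every `ε ∈ μ_r` the geometric sum
`1 + ε^w + ⋯ + ε^{w(r/w - 1)}` is `r/w` if `ε^w = 1` and `0` otherwise; consequently the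
Dedekind sums satisfy `Σ_{l=0}^{r/w-1} σ_{wl+k} = 0` for every `0 ≤ k ≤ w-1`. -/
theorem dedekind_partial_sums_vanish (r w n : ℕ) (hr : 2 ≤ r) (hw : 2 ≤ w) (hwr : w ∣ r)
    (a : Fin (n + 1) → ℕ) (ha : ∀ j, 0 < a j) (hra : ∀ j, ¬ r ∣ a j)
    (hgcd : Nat.gcd (a 0) r = w)
    (σ : ℕ → ℂ)
    (hσ : ∀ i, σ i = (1 / r : ℂ) *
      ∑ ε ∈ (nthRootsFinset r (1 : ℂ)).filter (fun ε => ∀ j, ε ^ (a j) ≠ 1),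
        ε ^ i / ∏ j, (1 - ε ^ (-(a j : ℤ))))
    (k : ℕ) (hk : k ≤ w - 1) :
    (∀ ε ∈ nthRootsFinset r (1 : ℂ),
        ∑ l ∈ Finset.range (r / w), ε ^ (w * l) =
          if ε ^ w = 1 then ((r / w : ℕ) : ℂ) else 0) ∧
    ∑ l ∈ Finset.range (r / w), σ (w * l + k) = 0 :=
  dedekind_partial_sums_vanish_general r w n hwr a hgcd σ hσ k
end

section
/- Let r ≥ 2 and let a_1,…,a_n be positive integers none divisible by r. Then all the Dedekind sums σ_i = (1/r)·Σ_{ε ∈ μ_r, ε^{a_j}≠1 ∀j} ε^i/∏_{j=1}^n(1−ε^{-a_j}) are rational numbers. -/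
/-!
Every field embedding `K → L` with `#μ_r(L) ≤ #μ_r(K)` maps the `r`-th roots of unity of `K`
onto those of `L`, so it carries the Dedekind sum formed in `K` to the one formed in `L`.
Forming the sum in the cyclotomic field `K = ℚ(μ_r)`, this shows that it is fixed by
`Gal(K/ℚ)`, hence lies in `ℚ`, and that an embedding `K → ℂ` sends it to the complex sum.
-/

open Polynomial Finset

theorem surjOn_nthRootsFinset_one_of_card_le {K L : Type*} [Field K] [CommRing L] [IsDomain L]
    (φ : K →+* L) {r : ℕ} (hcard : #(nthRootsFinset r (1 : L)) ≤ #(nthRootsFinset r (1 : K))) :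
    Set.SurjOn φ (nthRootsFinset r (1 : K)) (nthRootsFinset r (1 : L)) := fun η hη ↦
  have ⟨ε, hε, hη⟩ := Set.surj_on_of_inj_on_of_ncard_le _
    (fun _ hx ↦ map_mem_nthRootsFinset_one hx φ) (fun _ _ _ _ h ↦ φ.injective h)
    (by simpa only [Set.ncard_coe_finset] using hcard) (finite_toSet _) η hη
  ⟨ε, hε, hη.symm⟩

open Classical in
noncomputable def dedekindSum (K : Type*) [Field K] {n : ℕ} (r : ℕ) (a : Fin n → ℕ) (i : ℕ) :
    K :=
  (1 / r : K) * ∑ ε ∈ (nthRootsFinset r (1 : K)).filter (fun ε => ∀ j, ε ^ (a j) ≠ 1),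
    ε ^ i / ∏ j, (1 - ε ^ (-(a j : ℤ)))

theorem map_dedekindSum {K L : Type*} [Field K] [Field L] (φ : K →+* L) {r n : ℕ}
    (a : Fin n → ℕ) (i : ℕ)
    (hcard : #(nthRootsFinset r (1 : L)) ≤ #(nthRootsFinset r (1 : K))) :
    φ (dedekindSum K r a i) = dedekindSum L r a i := by
  classical
  have hpow (ε : K) (j : Fin n) : φ ε ^ a j = 1 ↔ ε ^ a j = 1 := by
    rw [← map_pow, ← map_one φ, φ.injective.eq_iff]
  rw [dedekindSum, dedekindSum, map_mul, map_sum]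
  congr 1
  · simp
  refine sum_nbij φ (fun ε hε ↦ ?_) (fun _ _ _ _ h ↦ φ.injective h) (fun η hη ↦ ?_) (fun ε _ ↦ ?_)
  · simp only [mem_filter, ne_eq, hpow] at hε ⊢
    exact ⟨map_mem_nthRootsFinset_one hε.1 φ, hε.2⟩
  · simp only [coe_filter, Set.mem_ofPred_eq] at hη
    obtain ⟨ε, hε, rfl⟩ := surjOn_nthRootsFinset_one_of_card_le φ hcard hη.1
    exact ⟨ε, mem_filter.2 ⟨hε, by simpa [hpow] using hη.2⟩, rfl⟩
  · simp [map_div₀, map_prod]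

theorem dedekind_sums_rational_general (r n : ℕ) (a : Fin n → ℕ) (i : ℕ) :
    ∃ q : ℚ,
      (1 / r : ℂ) * ∑ ε ∈ (nthRootsFinset r (1 : ℂ)).filter (fun ε => ∀ j, ε ^ (a j) ≠ 1),
        ε ^ i / ∏ j, (1 - ε ^ (-(a j : ℤ))) = (q : ℂ) := by
  rcases Nat.eq_zero_or_pos r with rfl | hr
  · exact ⟨0, by simp⟩
  have := NeZero.of_pos hr
  set K := CyclotomicField r ℚ
  have : IsCyclotomicExtension {r} ℚ K := CyclotomicField.isCyclotomicExtension r ℚ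
  have := IsCyclotomicExtension.isGalois {r} ℚ K
  have := IsCyclotomicExtension.finiteDimensional {r} ℚ K
  obtain ⟨ζ, hζ⟩ := IsCyclotomicExtension.exists_isPrimitiveRoot ℚ K (Set.mem_singleton r) hr.ne'
  obtain ⟨q, hq⟩ := (IsGalois.mem_range_algebraMap_iff_fixed (F := ℚ) (dedekindSum K r a i)).2
    fun g ↦ map_dedekindSum (g : K →+* K) a i le_rfl
  let φ : K →ₐ[ℚ] ℂ := IsAlgClosed.lift
  refine ⟨q, ?_⟩
  change dedekindSum ℂ r a i = q
  rw [← map_dedekindSum (φ : K →+* ℂ) a i, ← hq]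
  · exact φ.commutes q
  · rw [hζ.card_nthRootsFinset, (Complex.isPrimitiveRoot_exp r hr.ne').card_nthRootsFinset]

open Classical in
/-- For `r ≥ 2` and positive integers `a_1, …, a_n` none divisible by `r`, every Dedekind sum
`σ_i = (1/r) Σ_{ε ∈ μ_r, ε^{a_j} ≠ 1 ∀ j} ε^i / ∏_j (1 - ε^{-a_j})` is a rational number. -/
theorem dedekind_sums_rational (r n : ℕ) (hr : 2 ≤ r) (a : Fin n → ℕ)
    (ha : ∀ j, 0 < a j) (hra : ∀ j, ¬ r ∣ a j) (i : ℕ) :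
    ∃ q : ℚ,
      (1 / r : ℂ) * ∑ ε ∈ (nthRootsFinset r (1 : ℂ)).filter (fun ε => ∀ j, ε ^ (a j) ≠ 1),
        ε ^ i / ∏ j, (1 - ε ^ (-(a j : ℤ))) = (q : ℂ) :=
  dedekind_sums_rational_general r n a i
end

section
/- Let s ≥ 2 and b_1,…,b_n be positive integers, none divisible by s, such that gcd(s, b_i, b_j) = 1 for all i ≠ j. Set w_i = gcd(s, b_i) and h = ∏_{i=1}^n (1 − t^{w_i})/(1 − t) in ℚ[t]. Then h = gcd(∏_{i=1}^n (1 − t^{b_i}), (1 − t^s)/(1 − t)) in ℚ[t] (up to a unit). -/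
/-!
Both polynomials are products of cyclotomic polynomials: `(1 - t^s)/(1 - t) = ∏ Φ_d` over the
divisors `d ≠ 1` of `s`, and `Φ_d ∣ ∏ (1 - t^{b_i})` iff `d ∣ b_i` for some `i`, since over `ℚ`
the `Φ_d` are irreducible and pairwise coprime. So the gcd is the product of `Φ_d` over the
`d ≠ 1` dividing some `w_i = gcd(s, b_i)`. The pairwise coprimality of the `w_i` makes the sets
of such divisors disjoint, so this product is exactly `∏_i ∏_{1 ≠ d ∣ w_i} Φ_d = h`.
-/

open Polynomial Finset

theorem EuclideanDomain.associated_gcd_mul_of_dvd_of_isCoprime {R : Type*} [EuclideanDomain R] [DecidableEq R]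
    {a p q : R} (hpa : p ∣ a) (hqa : IsCoprime a q) :
    Associated p (EuclideanDomain.gcd a (p * q)) :=
  associated_of_dvd_dvd (dvd_gcd hpa (dvd_mul_right p q))
    ((hqa.of_isCoprime_of_dvd_left (gcd_dvd_left a _)).dvd_of_dvd_mul_right (gcd_dvd_right a _))

theorem geom_sum_X_dvd_one_sub_X_pow {R : Type*} [CommRing R] {w m : ℕ} (h : w ∣ m) :
    ∑ j ∈ range w, (X : R[X]) ^ j ∣ 1 - X ^ m := by
  rw [← dvd_neg, neg_sub]
  exact (Dvd.intro _ (geom_sum_mul X w)).trans (dvd_pow_sub_one_of_dvd h)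

theorem cyclotomic_rat_dvd_X_pow_sub_one_iff {d m : ℕ} (hd : 0 < d) :
    cyclotomic d ℚ ∣ X ^ m - 1 ↔ d ∣ m := by
  refine ⟨fun h => ?_, fun h => (cyclotomic.dvd_X_pow_sub_one d ℚ).trans (dvd_pow_sub_one_of_dvd h)⟩
  rcases m.eq_zero_or_pos with rfl | hm
  · exact dvd_zero d
  have hprime := (cyclotomic.irreducible_rat hd).prime
  rw [← prod_cyclotomic_eq_X_pow_sub_one hm, hprime.dvd_finsetProd_iff] at h
  obtain ⟨e, he, hde⟩ := h
  obtain rfl : d = e := by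
    by_contra hne
    exact hprime.not_isUnit ((cyclotomic.isCoprime_rat hne).isUnit_of_dvd' dvd_rfl hde)
  exact Nat.dvd_of_mem_divisors he

theorem cyclotomic_rat_dvd_prod_one_sub_X_pow_iff {ι : Type*} (t : Finset ι) (b : ι → ℕ) {d : ℕ}
    (hd : 0 < d) : cyclotomic d ℚ ∣ ∏ i ∈ t, (1 - X ^ b i) ↔ ∃ i ∈ t, d ∣ b i := by
  simp only [(cyclotomic.irreducible_rat hd).prime.dvd_finsetProd_iff, ← neg_sub (X ^ _) (1 : ℚ[X]),
    dvd_neg, cyclotomic_rat_dvd_X_pow_sub_one_iff hd]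

theorem prod_geom_sum_gcd_eq_prod_cyclotomic {ι : Type*} [Fintype ι] {s : ℕ} (hs : 0 < s)
    (b : ι → ℕ) (hpair : Pairwise fun i j => Nat.gcd s (Nat.gcd (b i) (b j)) = 1)
    (R : Type*) [CommRing R] :
    ∏ i, ∑ j ∈ range (Nat.gcd s (b i)), (X : R[X]) ^ j =
      ∏ d ∈ s.divisors.erase 1 with ∃ i, d ∣ b i, cyclotomic d R := by
  have hunion : {d ∈ s.divisors.erase 1 | ∃ i, d ∣ b i} =
      univ.biUnion fun i => (Nat.gcd s (b i)).divisors.erase 1 := by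
    ext d
    simp only [mem_filter, mem_erase, Nat.mem_divisors, mem_biUnion, mem_univ, true_and,
      Nat.dvd_gcd_iff, ne_eq, Nat.gcd_eq_zero_iff, hs.ne', false_and, not_false_eq_true, and_true]
    tauto
  have hdisj : ((univ : Finset ι) : Set ι).PairwiseDisjoint
      fun i => (Nat.gcd s (b i)).divisors.erase 1 := by
    intro i _ j _ hij
    refine disjoint_left.mpr fun d hdi hdj => (mem_erase.mp hdi).1 ?_
    have hdi := Nat.dvd_of_mem_divisors (mem_of_mem_erase hdi)
    have hdj := Nat.dvd_of_mem_divisors (mem_of_mem_erase hdj)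
    rw [Nat.dvd_gcd_iff] at hdi hdj
    simpa [hpair hij] using Nat.dvd_gcd hdi.1 (Nat.dvd_gcd hdi.2 hdj.2)
  rw [hunion, prod_biUnion hdisj]
  exact prod_congr rfl fun i _ => (prod_cyclotomic_eq_geom_sum (Nat.gcd_pos_of_pos_left _ hs) R).symm

theorem h_eq_gcd_general (s n : ℕ) (hs : 2 ≤ s) (b : Fin n → ℕ)
    (hpair : ∀ i j, i ≠ j → Nat.gcd s (Nat.gcd (b i) (b j)) = 1) :
    Associated
      (∏ i, ∑ j ∈ Finset.range (Nat.gcd s (b i)), (X : ℚ[X]) ^ j)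
      (EuclideanDomain.gcd (∏ i, (1 - (X : ℚ[X]) ^ (b i)))
        (∑ j ∈ Finset.range s, (X : ℚ[X]) ^ j)) := by
  have hs0 : 0 < s := by omega
  have hsplit : ∑ j ∈ range s, (X : ℚ[X]) ^ j =
      (∏ i, ∑ j ∈ range (Nat.gcd s (b i)), (X : ℚ[X]) ^ j) *
        ∏ d ∈ s.divisors.erase 1 with ¬∃ i, d ∣ b i, cyclotomic d ℚ := by
    rw [prod_geom_sum_gcd_eq_prod_cyclotomic hs0 b (fun i j => hpair i j),
      prod_filter_mul_prod_filter_not, prod_cyclotomic_eq_geom_sum hs0]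
  rw [hsplit]
  refine EuclideanDomain.associated_gcd_mul_of_dvd_of_isCoprime
    (prod_dvd_prod_of_dvd _ _ fun i _ =>
      geom_sum_X_dvd_one_sub_X_pow (R := ℚ) (Nat.gcd_dvd_right s (b i)))
    (IsCoprime.prod_right fun d hd => ?_)
  obtain ⟨hd, hnot⟩ := mem_filter.mp hd
  have hd0 := Nat.pos_of_mem_divisors (mem_of_mem_erase hd)
  rw [isCoprime_comm, (cyclotomic.irreducible_rat hd0).coprime_iff_not_dvd,
    cyclotomic_rat_dvd_prod_one_sub_X_pow_iff _ _ hd0]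
  simpa using hnot

/-- Let `s ≥ 2` and `b_1, …, b_n` be positive integers none divisible by `s` with
`gcd(s, b_i, b_j) = 1` for `i ≠ j`. Setting `w_i = gcd(s, b_i)`, the polynomial
`h = ∏_i (1 - t^{w_i})/(1 - t) = ∏_i (1 + t + ⋯ + t^{w_i - 1})` is, up to a unit, the gcd of
`∏_i (1 - t^{b_i})` and `(1 - t^s)/(1 - t)` in `ℚ[t]`. -/
theorem h_eq_gcd (s n : ℕ) (hs : 2 ≤ s) (b : Fin n → ℕ)
    (hb : ∀ i, 0 < b i) (hsb : ∀ i, ¬ s ∣ b i)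
    (hpair : ∀ i j, i ≠ j → Nat.gcd s (Nat.gcd (b i) (b j)) = 1) :
    Associated
      (∏ i, ∑ j ∈ Finset.range (Nat.gcd s (b i)), (X : ℚ[X]) ^ j)
      (EuclideanDomain.gcd (∏ i, (1 - (X : ℚ[X]) ^ (b i)))
        (∑ j ∈ Finset.range s, (X : ℚ[X]) ^ j)) :=
  h_eq_gcd_general s n hs b hpair
end

section
/- Let s ≥ 2 and b_1,…,b_n positive integers none divisible by s, with w_i = gcd(s, b_i) and gcd(s, b_i, b_j) = 1 for i ≠ j. Let α_i be the smallest positive integer with α_i b_i ≡ w_i (mod s). Then the polynomial ∏_{i=1}^n (1 − t^{α_i b_i})/(1 − t^{b_i}) has integral coefficients and is an inverse of ∏_{i=1}^n (1 − t^{b_i})/(1 − t^{w_i}) modulo (1 − t^s)/((1−t)h), where h = ∏_{i=1}^n (1 − t^{w_i})/(1 − t). -/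
open Polynomial Finset Function

/-!
Write `w_i = gcd(s, b_i)`. Since `w_i ∣ b_i ∣ α_i b_i`, the product of the two given products is
`R = ∏ (1 - t^{α_i b_i}) / (1 - t^{w_i})`. With `P = ∏ (1 - t^{w_i}) = (1 - t)^n h` we get
`P R = ∏ (1 - t^{α_i b_i}) ≡ P` modulo `t^s - 1 = (t - 1) g`, where `g = 1 + t + ⋯ + t^{s-1}`,
because `α_i b_i ≡ w_i (mod s)`. The `w_i` are pairwise coprime divisors of `s`, so `h ∣ g`, and
cancelling `h` leaves `g / h ∣ (1 - t)^n (R - 1)`; finally `g / h` is coprime to `1 - t` because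
`g(1) = s ≠ 0`. Integrality holds since each `(1 - t^{α_i b_i}) / (1 - t^{b_i})` is a geometric sum
in `t^{b_i}`.
-/

theorem dvd_prod_sub_prod {ι R : Type*} [CommRing R] (t : Finset ι) {f g : ι → R} {d : R}
    (h : ∀ i ∈ t, d ∣ f i - g i) : d ∣ ∏ i ∈ t, f i - ∏ i ∈ t, g i := by
  simp_rw [← Ideal.mem_span_singleton, ← Ideal.Quotient.eq, map_prod] at h ⊢
  exact prod_congr rfl h

theorem pow_sub_one_dvd_pow_sub_pow_of_modEq {R : Type*} [CommRing R] (x : R) {s a c : ℕ}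
    (h : a ≡ c [MOD s]) : x ^ s - 1 ∣ x ^ a - x ^ c := by
  wlog hca : c ≤ a generalizing a c
  · simpa using (this h.symm (by omega)).neg_right
  obtain ⟨k, hk⟩ := (Nat.modEq_iff_dvd' hca).mp h.symm
  rw [show a = c + s * k by omega, pow_add, pow_mul, ← mul_sub_one]
  simpa using (sub_one_dvd_pow_sub_one (x ^ s) k).mul_left (x ^ c)

theorem Nat.coprime_gcd_gcd_of_gcd_eq_one {s a b : ℕ} (h : s.gcd (a.gcd b) = 1) :
    (s.gcd a).Coprime (s.gcd b) := by
  refine Nat.eq_one_of_dvd_one (h ▸ Nat.dvd_gcd ?_ (Nat.dvd_gcd ?_ ?_))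
  · exact (Nat.gcd_dvd_left _ _).trans (Nat.gcd_dvd_left _ _)
  · exact (Nat.gcd_dvd_left _ _).trans (Nat.gcd_dvd_right _ _)
  · exact (Nat.gcd_dvd_right _ _).trans (Nat.gcd_dvd_right _ _)

theorem EuclideanDomain.div_mul_div_cancel_of_dvd {R : Type*} [EuclideanDomain R] {a b c : R}
    (hb : b ≠ 0) (hab : a ∣ b) (hbc : b ∣ c) : c / b * (b / a) = c / a := by
  obtain ⟨x, rfl⟩ := hab
  obtain ⟨y, rfl⟩ := hbc
  have ha : a ≠ 0 := left_ne_zero_of_mul hb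
  rw [mul_div_cancel_left₀ _ hb, mul_div_cancel_left₀ _ ha, mul_assoc, mul_div_cancel_left₀ _ ha,
    mul_comm]

namespace Polynomial

section Field

variable {K : Type*} [Field K]

theorem one_sub_X_pow_ne_zero {b : ℕ} (hb : 0 < b) : (1 - X ^ b : K[X]) ≠ 0 := by
  rw [← neg_sub, neg_ne_zero]
  simpa using X_pow_sub_C_ne_zero hb (1 : K)

theorem one_sub_X_pow_dvd {b c : ℕ} (h : b ∣ c) : (1 - X ^ b : K[X]) ∣ 1 - X ^ c := by
  obtain ⟨k, rfl⟩ := h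
  simpa [pow_mul] using one_sub_dvd_one_sub_pow (X ^ b : K[X]) k

theorem one_sub_X_pow_mul_div_eq_geom_sum {b : ℕ} (hb : 0 < b) (m : ℕ) :
    (1 - X ^ (m * b) : K[X]) / (1 - X ^ b) = ∑ j ∈ range m, (X ^ b) ^ j := by
  rw [mul_comm, pow_mul, ← mul_neg_geom_sum, mul_div_cancel_left₀ _ (one_sub_X_pow_ne_zero hb)]

theorem one_sub_X_pow_div_one_sub_X_eq_geom_sum (m : ℕ) :
    (1 - X ^ m : K[X]) / (1 - X) = ∑ j ∈ range m, X ^ j := by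
  simpa using one_sub_X_pow_mul_div_eq_geom_sum (K := K) one_pos m

theorem one_sub_X_pow_mul_div_cancel {b c : ℕ} (hb : 0 < b) (h : b ∣ c) :
    (1 - X ^ b : K[X]) * ((1 - X ^ c) / (1 - X ^ b)) = 1 - X ^ c :=
  EuclideanDomain.mul_div_cancel' (one_sub_X_pow_ne_zero hb) (one_sub_X_pow_dvd h)

theorem dvd_of_dvd_one_sub_X_pow_mul {g p : K[X]} (hg : g.eval 1 ≠ 0) {n : ℕ}
    (h : g ∣ (1 - X) ^ n * p) : g ∣ p := by
  have hcop : IsCoprime g (1 - X) := by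
    rw [← neg_sub, IsCoprime.neg_right_iff, ← C_1]
    exact ((irreducible_X_sub_C 1).coprime_iff_not_dvd.2 (by rwa [dvd_iff_isRoot])).symm
  exact (hcop.pow_right).dvd_of_dvd_mul_left h

end Field

theorem geom_sum_X_dvd_geom_sum_X {R : Type*} [CommRing R] {a b : ℕ} (hb : 0 < b) (hab : a ∣ b) :
    ∑ j ∈ range a, (X : R[X]) ^ j ∣ ∑ j ∈ range b, X ^ j := by
  rw [← prod_cyclotomic_eq_geom_sum (Nat.pos_of_dvd_of_pos hab hb),
    ← prod_cyclotomic_eq_geom_sum hb]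
  exact prod_dvd_prod_of_subset _ _ _ (erase_subset_erase 1 (Nat.divisors_subset_of_dvd hb.ne' hab))

theorem isCoprime_geom_sum_X {a b : ℕ} (ha : 0 < a) (hb : 0 < b) (hab : a.Coprime b) :
    IsCoprime (∑ j ∈ range a, (X : ℚ[X]) ^ j) (∑ j ∈ range b, X ^ j) := by
  rw [← prod_cyclotomic_eq_geom_sum ha, ← prod_cyclotomic_eq_geom_sum hb]
  refine IsCoprime.prod_left fun d hd => IsCoprime.prod_right fun e he => ?_
  refine cyclotomic.isCoprime_rat fun hde => ?_
  subst hde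
  rw [mem_erase, Nat.mem_divisors] at hd he
  exact hd.1 (Nat.eq_one_of_dvd_coprimes hab hd.2.1 he.2.1)

theorem prod_geom_sum_X_dvd_geom_sum_X {ι : Type*} (t : Finset ι) {w : ι → ℕ} {s : ℕ}
    (hs : 0 < s) (hws : ∀ i ∈ t, w i ∣ s) (hcop : (t : Set ι).Pairwise (Nat.Coprime on w)) :
    ∏ i ∈ t, ∑ j ∈ range (w i), (X : ℚ[X]) ^ j ∣ ∑ j ∈ range s, X ^ j := by
  have hw : ∀ i ∈ t, 0 < w i := fun i hi => Nat.pos_of_dvd_of_pos (hws i hi) hs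
  exact prod_dvd_of_coprime
    (fun i hi j hj hij => isCoprime_geom_sum_X (hw i hi) (hw j hj) (hcop hi hj hij))
    fun i hi => geom_sum_X_dvd_geom_sum_X hs (hws i hi)

theorem geom_sum_div_prod_dvd_prod_div_sub_one {ι : Type*} [Fintype ι] {s : ℕ} (hs : 0 < s)
    {w e : ι → ℕ} (hws : ∀ i, w i ∣ s) (hcop : Pairwise (Nat.Coprime on w))
    (hwe : ∀ i, w i ∣ e i) (hmod : ∀ i, e i ≡ w i [MOD s]) :
    (∑ j ∈ range s, (X : ℚ[X]) ^ j) / ∏ i, ((1 - X ^ w i) / (1 - X)) ∣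
      ∏ i, ((1 - X ^ e i) / (1 - X ^ w i)) - 1 := by
  set g : ℚ[X] := ∑ j ∈ range s, X ^ j
  set h : ℚ[X] := ∏ i, ((1 - X ^ w i) / (1 - X))
  set R : ℚ[X] := ∏ i, ((1 - X ^ e i) / (1 - X ^ w i))
  have hw : ∀ i, 0 < w i := fun i => Nat.pos_of_dvd_of_pos (hws i) hs
  have hg1 : g.eval 1 ≠ 0 := by simp [g, hs.ne']
  have hhg : h ∣ g := by
    simpa only [h, one_sub_X_pow_div_one_sub_X_eq_geom_sum] using
      prod_geom_sum_X_dvd_geom_sum_X univ hs (fun i _ => hws i) fun i _ j _ hij => hcop hij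
  have hh0 : h ≠ 0 := ne_zero_of_dvd_ne_zero (fun h0 => hg1 (by simp [h0])) hhg
  have hg : g = h * (g / h) := (EuclideanDomain.mul_div_cancel' hh0 hhg).symm
  have hq1 : (g / h).eval 1 ≠ 0 := fun h0 => hg1 (by rw [hg, eval_mul, h0, mul_zero])
  have hP : ∏ i, (1 - X ^ w i : ℚ[X]) = (1 - X) ^ Fintype.card ι * h := by
    rw [← Finset.card_univ, ← prod_const, ← prod_mul_distrib]
    exact prod_congr rfl fun i _ => by simpa using (one_sub_X_pow_mul_div_cancel one_pos
      (one_dvd (w i)) (K := ℚ)).symm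
  have hPR : (∏ i, (1 - X ^ w i : ℚ[X])) * R = ∏ i, (1 - X ^ e i) := by
    rw [← prod_mul_distrib]
    exact prod_congr rfl fun i _ => one_sub_X_pow_mul_div_cancel (hw i) (hwe i)
  have hcong : (X ^ s - 1 : ℚ[X]) ∣ ∏ i, (1 - X ^ e i) - ∏ i, (1 - X ^ w i) :=
    dvd_prod_sub_prod univ fun i _ => by
      simpa only [sub_sub_sub_cancel_left] using
        pow_sub_one_dvd_pow_sub_pow_of_modEq X (hmod i).symm
  have hXs : (X ^ s - 1 : ℚ[X]) = (X - 1) * (h * (g / h)) := by rw [← hg, mul_geom_sum]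
  rw [hXs, ← hPR, ← mul_sub_one, hP] at hcong
  refine dvd_of_dvd_one_sub_X_pow_mul (n := Fintype.card ι) hq1
    ((mul_dvd_mul_iff_left hh0).mp ?_)
  exact (dvd_of_mul_left_dvd hcong).trans ⟨1, by ring⟩

end Polynomial

theorem integral_inverse_mod_general (s n : ℕ) (hs : 2 ≤ s) (b : Fin n → ℕ)
    (hb : ∀ i, 0 < b i)
    (hpair : ∀ i j, i ≠ j → Nat.gcd s (Nat.gcd (b i) (b j)) = 1)
    (α : Fin n → ℕ)
    (hα : ∀ i, 0 < α i ∧ α i * b i ≡ Nat.gcd s (b i) [MOD s] ∧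
      ∀ m : ℕ, 0 < m → m * b i ≡ Nat.gcd s (b i) [MOD s] → α i ≤ m) :
    (∀ k : ℕ, ∃ z : ℤ,
      (∏ i, ((1 - (X : ℚ[X]) ^ (α i * b i)) / (1 - (X : ℚ[X]) ^ (b i)))).coeff k = (z : ℚ)) ∧
    ((∑ j ∈ Finset.range s, (X : ℚ[X]) ^ j) /
        ∏ i, ((1 - (X : ℚ[X]) ^ (Nat.gcd s (b i))) / (1 - (X : ℚ[X])))) ∣
      ((∏ i, ((1 - (X : ℚ[X]) ^ (α i * b i)) / (1 - (X : ℚ[X]) ^ (b i)))) *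
        (∏ i, ((1 - (X : ℚ[X]) ^ (b i)) / (1 - (X : ℚ[X]) ^ (Nat.gcd s (b i))))) - 1) := by
  constructor
  · intro k
    refine ⟨(∏ i, ∑ j ∈ range (α i), (X ^ b i : ℤ[X]) ^ j).coeff k, ?_⟩
    rw [← eq_intCast (Int.castRingHom ℚ), ← coeff_map]
    simp [one_sub_X_pow_mul_div_eq_geom_sum (hb _), Polynomial.map_prod, Polynomial.map_sum]
  · have hw : ∀ i, s.gcd (b i) ∣ b i := fun i => Nat.gcd_dvd_right _ _
    rw [← prod_mul_distrib, prod_congr rfl fun i _ =>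
      EuclideanDomain.div_mul_div_cancel_of_dvd (one_sub_X_pow_ne_zero (hb i))
        (one_sub_X_pow_dvd (hw i)) (one_sub_X_pow_dvd (dvd_mul_left _ _))]
    exact geom_sum_div_prod_dvd_prod_div_sub_one (by omega) (fun i => Nat.gcd_dvd_left _ _)
      (fun i j hij => Nat.coprime_gcd_gcd_of_gcd_eq_one (hpair i j hij))
      (fun i => (hw i).trans (dvd_mul_left _ _)) fun i => (hα i).2.1

/-- Let `s ≥ 2`, `b_1, …, b_n` positive none divisible by `s`, `w_i = gcd(s, b_i)` with
`gcd(s, b_i, b_j) = 1` for `i ≠ j`, and let `α_i` be the smallest positive integer with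
`α_i b_i ≡ w_i (mod s)`. Then `∏_i (1 - t^{α_i b_i})/(1 - t^{b_i})` has integral coefficients
and is an inverse of `∏_i (1 - t^{b_i})/(1 - t^{w_i})` modulo `(1 - t^s)/((1-t)h)`, where
`h = ∏_i (1 - t^{w_i})/(1 - t)`. -/
theorem integral_inverse_mod (s n : ℕ) (hs : 2 ≤ s) (b : Fin n → ℕ)
    (hb : ∀ i, 0 < b i) (hsb : ∀ i, ¬ s ∣ b i)
    (hpair : ∀ i j, i ≠ j → Nat.gcd s (Nat.gcd (b i) (b j)) = 1)
    (α : Fin n → ℕ)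
    (hα : ∀ i, 0 < α i ∧ α i * b i ≡ Nat.gcd s (b i) [MOD s] ∧
      ∀ m : ℕ, 0 < m → m * b i ≡ Nat.gcd s (b i) [MOD s] → α i ≤ m) :
    (∀ k : ℕ, ∃ z : ℤ,
      (∏ i, ((1 - (X : ℚ[X]) ^ (α i * b i)) / (1 - (X : ℚ[X]) ^ (b i)))).coeff k = (z : ℚ)) ∧
    ((∑ j ∈ Finset.range s, (X : ℚ[X]) ^ j) /
        ∏ i, ((1 - (X : ℚ[X]) ^ (Nat.gcd s (b i))) / (1 - (X : ℚ[X])))) ∣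
      ((∏ i, ((1 - (X : ℚ[X]) ^ (α i * b i)) / (1 - (X : ℚ[X]) ^ (b i)))) *
        (∏ i, ((1 - (X : ℚ[X]) ^ (b i)) / (1 - (X : ℚ[X]) ^ (Nat.gcd s (b i))))) - 1) :=
  integral_inverse_mod_general s n hs b hb hpair α hα
end

section
/- Suppose S(t), s_1(t), …, s_l(t) ∈ ℚ[t] satisfy S(t) = Σ_{i=1}^l s_i(t) · ∏_{j ≠ i} (1 − t^{w_j})/(1 − t), where w_1, …, w_l ≥ 2 are pairwise coprime integers. Then for each i, s_i(t) ≡ S(t) · ∏_{j ≠ i} (1 − t^{w_j v_{ij}})/(1 − t^{w_j}) modulo (1 − t^{w_i})/(1 − t), where v_{ij} is any positive integer with w_j v_{ij} ≡ 1 (mod w_i). -/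
open Polynomial Finset

/-!
Write `Φ_a(x) = 1 + x + ⋯ + x^(a-1)` and reduce modulo `Φ_{w_i}(t)`. This kills every summand
of `S` except the `i`-th, and for `j ≠ i` the factor `Φ_{w_j}(t)` is inverted by
`Φ_{v_ij}(t^{w_j})`: their product is `Φ_{w_j v_ij}(t) ≡ Φ_1(t) = 1`, because
`Φ_a ∣ Φ_m - Φ_n` whenever `m ≡ n [MOD a]`.
-/

section GeomSum

variable {R : Type*}

theorem geom_sum_mul_geom_sum_pow [CommSemiring R] (x : R) (a b : ℕ) :
    (∑ i ∈ range a, x ^ i) * ∑ i ∈ range b, (x ^ a) ^ i = ∑ i ∈ range (a * b), x ^ i := by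
  induction b with
  | zero => simp
  | succ b ih =>
    rw [sum_range_succ, mul_add, ih, Nat.mul_succ, sum_range_add, ← pow_mul, sum_mul]
    simp only [pow_add, mul_comm]

theorem geom_sum_dvd_geom_sum_of_dvd [CommSemiring R] (x : R) {a b : ℕ} (h : a ∣ b) :
    (∑ i ∈ range a, x ^ i) ∣ ∑ i ∈ range b, x ^ i := by
  obtain ⟨k, rfl⟩ := h
  exact ⟨_, (geom_sum_mul_geom_sum_pow x a k).symm⟩

theorem geom_sum_dvd_geom_sum_sub_geom_sum_of_modEq [CommRing R] (x : R) {a m n : ℕ}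
    (h : m ≡ n [MOD a]) :
    (∑ i ∈ range a, x ^ i) ∣ (∑ i ∈ range m, x ^ i) - ∑ i ∈ range n, x ^ i := by
  wlog hnm : n ≤ m generalizing m n
  · exact dvd_sub_comm.mp (this h.symm (by omega))
  have hdiff : (∑ i ∈ range m, x ^ i) - ∑ i ∈ range n, x ^ i =
      x ^ n * ∑ i ∈ range (m - n), x ^ i := by
    rw [← Nat.add_sub_cancel' hnm, sum_range_add, add_sub_cancel_left, Nat.add_sub_cancel_left,
      mul_sum]
    simp only [pow_add]
  rw [hdiff]
  exact (geom_sum_dvd_geom_sum_of_dvd x ((Nat.modEq_iff_dvd' hnm).mp h.symm)).mul_left _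

end GeomSum

theorem dvd_sub_sum_mul_prod_erase_mul_prod_erase {R ι : Type*} [CommRing R] [Fintype ι]
    [DecidableEq ι] {p : R} (f g s : ι → R) (i : ι) (hfi : p ∣ f i)
    (hfg : ∀ j ≠ i, p ∣ f j * g j - 1) :
    p ∣ s i - (∑ k, s k * ∏ j ∈ univ.erase k, f j) * ∏ j ∈ univ.erase i, g j := by
  let π := Ideal.Quotient.mk (Ideal.span {p})
  have hπ : ∀ y, π y = 0 ↔ p ∣ y := fun y ↦
    Ideal.Quotient.eq_zero_iff_mem.trans Ideal.mem_span_singleton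
  have hπfi : π (f i) = 0 := (hπ _).mpr hfi
  have hπfg : ∀ j ∈ univ.erase i, π (f j) * π (g j) = 1 := fun j hj ↦ by
    rw [← map_mul, ← sub_eq_zero, ← map_one π, ← map_sub, hπ]
    exact hfg j (ne_of_mem_erase hj)
  have hsum : π (∑ k, s k * ∏ j ∈ univ.erase k, f j) = π (s i) * ∏ j ∈ univ.erase i, π (f j) := by
    rw [map_sum, sum_eq_single i (fun k _ hki ↦ ?_) (by simp), map_mul, map_prod]
    rw [map_mul, map_prod, prod_eq_zero (mem_erase.mpr ⟨hki.symm, mem_univ i⟩) hπfi, mul_zero]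
  rw [← hπ, map_sub, sub_eq_zero, map_mul, hsum, map_prod, mul_assoc, ← prod_mul_distrib,
    prod_eq_one hπfg, mul_one]

theorem component_congruence_general (l : ℕ) (w : Fin l → ℕ)
    (v : Fin l → Fin l → ℕ) (hv : ∀ i j, i ≠ j → 0 < v i j ∧ w j * v i j ≡ 1 [MOD w i])
    (S : ℚ[X]) (s : Fin l → ℚ[X])
    (hS : S = ∑ i, s i * ∏ j ∈ Finset.univ.erase i,
      ∑ d ∈ Finset.range (w j), (X : ℚ[X]) ^ d) :
    ∀ i, (∑ d ∈ Finset.range (w i), (X : ℚ[X]) ^ d) ∣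
      (s i - S * ∏ j ∈ Finset.univ.erase i,
        ∑ d ∈ Finset.range (v i j), (X : ℚ[X]) ^ (d * w j)) := by
  intro i
  subst hS
  refine dvd_sub_sum_mul_prod_erase_mul_prod_erase _ _ s i dvd_rfl fun j hji ↦ ?_
  simp_rw [pow_mul']
  rw [geom_sum_mul_geom_sum_pow, ← geom_sum_one (X : ℚ[X])]
  exact geom_sum_dvd_geom_sum_sub_geom_sum_of_modEq _ (hv i j hji.symm).2

/-- Suppose `S = Σ_i s_i · ∏_{j ≠ i} (1 + t + ⋯ + t^{w_j - 1})` in `ℚ[t]`, where the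
`w_i ≥ 2` are pairwise coprime. Then for each `i`,
`s_i ≡ S · ∏_{j ≠ i} (1 + t^{w_j} + ⋯ + t^{w_j(v_{ij}-1)})` modulo `1 + t + ⋯ + t^{w_i - 1}`,
for any positive `v_{ij}` with `w_j v_{ij} ≡ 1 (mod w_i)`. -/
theorem component_congruence (l : ℕ) (w : Fin l → ℕ) (hw : ∀ i, 2 ≤ w i)
    (hcop : ∀ i j, i ≠ j → Nat.Coprime (w i) (w j))
    (v : Fin l → Fin l → ℕ) (hv : ∀ i j, i ≠ j → 0 < v i j ∧ w j * v i j ≡ 1 [MOD w i])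
    (S : ℚ[X]) (s : Fin l → ℚ[X])
    (hS : S = ∑ i, s i * ∏ j ∈ Finset.univ.erase i,
      ∑ d ∈ Finset.range (w j), (X : ℚ[X]) ^ d) :
    ∀ i, (∑ d ∈ Finset.range (w i), (X : ℚ[X]) ^ d) ∣
      (s i - S * ∏ j ∈ Finset.univ.erase i,
        ∑ d ∈ Finset.range (v i j), (X : ℚ[X]) ^ (d * w j)) :=
  component_congruence_general l w v hv S s hS
end
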